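/- Let p be a prime and R a commutative ℚ-algebra. Let X, C ∈ R[[t]] with C having zero constant term and X = exp(C). Let U and V be the p-singular and p-regular parts of X, and let A and B be the p-singular and p-regular parts of C. Write ch_p(B) for the p-singular part of exp(B) and sh_p(B) for the p-regular part of exp(B). Then U = exp(A)·ch_p(B) and V = exp(A)·sh_p(B). -/

import Mathlib

open PowerSeries Finset

/-- The `p`-singular part of a power series `F = Σ fₙ tⁿ`, namely `Σ_{p ∣ n} fₙ tⁿ`. -/
noncomputable def pSingularPart {R : Type*} [CommRing R] (p : ℕ) (F : PowerSeries R) :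
    PowerSeries R :=
  PowerSeries.mk fun n => if p ∣ n then PowerSeries.coeff n F else 0

/-- The `p`-regular part of a power series `F = Σ fₙ tⁿ`, namely `Σ_{p ∤ n} fₙ tⁿ`. -/
noncomputable def pRegularPart {R : Type*} [CommRing R] (p : ℕ) (F : PowerSeries R) :
    PowerSeries R :=
  PowerSeries.mk fun n => if p ∣ n then 0 else PowerSeries.coeff n F

/-- `exp C = Σ_{k≥0} Cᵏ/k!` for a power series `C` with zero constant term over a
commutative `ℚ`-algebra.  (When the constant term of `C` is zero, `coeff n (C ^ k) = 0`
for `k > n`, so the truncated sum below computes the full exponential.) -/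
noncomputable def psExp {R : Type*} [CommRing R] [Algebra ℚ R] (C : PowerSeries R) :
    PowerSeries R :=
  PowerSeries.mk fun n => ∑ k ∈ Finset.range (n + 1),
    ((k.factorial : ℚ)⁻¹) • PowerSeries.coeff n (C ^ k)

/-!
Write `C = A + B` with `A` and `B` its `p`-singular and `p`-regular parts. Modulo `tⁿ⁺¹` both are
nilpotent, so the exponential of nilpotent elements gives `exp C = exp A · exp B`. The series
`exp A` is supported on multiples of `p`, and multiplication by such a series preserves the
residue of every exponent modulo `p`; hence it commutes with taking `p`-singular and `p`-regular
parts.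
-/

section Truncation

variable {R : Type*} [CommRing R]

local notation "mkTrunc" n => Ideal.Quotient.mk (Ideal.span {(X : PowerSeries R) ^ (n + 1)})

theorem coeff_eq_of_mkTrunc_eq {n : ℕ} {F G : PowerSeries R}
    (h : (mkTrunc n) F = (mkTrunc n) G) : coeff n F = coeff n G := by
  rw [Ideal.Quotient.eq, Ideal.mem_span_singleton] at h
  rw [← sub_eq_zero, ← map_sub]
  exact X_pow_dvd_iff.mp h n (Nat.lt_succ_self n)

theorem mkTrunc_pow_eq_zero {n : ℕ} {A : PowerSeries R} (hA : constantCoeff A = 0) :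
    (mkTrunc n) A ^ (n + 1) = 0 := by
  rw [← map_pow, Ideal.Quotient.eq_zero_iff_mem, Ideal.mem_span_singleton]
  exact pow_dvd_pow_of_dvd (X_dvd_iff.mpr hA) _

theorem coeff_pow_eq_zero_of_lt {A : PowerSeries R} (hA : constantCoeff A = 0)
    {n k : ℕ} (h : n < k) : coeff n (A ^ k) = 0 :=
  X_pow_dvd_iff.mp (pow_dvd_pow_of_dvd (X_dvd_iff.mpr hA) k) n h

variable [Algebra ℚ R]

theorem mkTrunc_psExp {n : ℕ} {A : PowerSeries R} (hA : constantCoeff A = 0) :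
    (mkTrunc n) (psExp A) = IsNilpotent.exp ((mkTrunc n) A) := by
  rw [IsNilpotent.exp_eq_sum (mkTrunc_pow_eq_zero hA)]
  simp only [← map_pow, ← map_rat_smul, ← map_sum]
  rw [Ideal.Quotient.eq, Ideal.mem_span_singleton, X_pow_dvd_iff]
  intro m hm
  rw [map_sub, sub_eq_zero, psExp, coeff_mk, map_sum]
  refine sum_subset (range_subset_range.mpr hm) fun k _ hk => ?_
  rw [mem_range, not_lt] at hk
  rw [coeff_pow_eq_zero_of_lt hA hk, smul_zero]

theorem psExp_add {A B : PowerSeries R} (hA : constantCoeff A = 0) (hB : constantCoeff B = 0) :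
    psExp (A + B) = psExp A * psExp B := by
  ext n
  apply coeff_eq_of_mkTrunc_eq
  have hAB : constantCoeff (A + B) = 0 := by rw [map_add, hA, hB, add_zero]
  rw [map_mul, mkTrunc_psExp hA, mkTrunc_psExp hB, mkTrunc_psExp hAB, map_add,
    IsNilpotent.exp_add_of_commute (Commute.all _ _) ⟨_, mkTrunc_pow_eq_zero hA⟩
      ⟨_, mkTrunc_pow_eq_zero hB⟩]

end Truncation

section Parts

variable {R : Type*} [CommRing R] (p : ℕ)

def IsPSingular (F : PowerSeries R) : Prop := ∀ n, ¬ p ∣ n → coeff n F = 0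

variable {p}

theorem IsPSingular.mul {F G : PowerSeries R} (hF : IsPSingular p F) (hG : IsPSingular p G) :
    IsPSingular p (F * G) := by
  intro n hn
  rw [coeff_mul]
  refine sum_eq_zero fun ij hij => ?_
  rw [HasAntidiagonal.mem_antidiagonal] at hij
  by_cases hi : p ∣ ij.1
  · rw [hG _ fun hj => hn (hij ▸ dvd_add hi hj), mul_zero]
  · rw [hF _ hi, zero_mul]

theorem IsPSingular.pow {F : PowerSeries R} (hF : IsPSingular p F) (k : ℕ) :
    IsPSingular p (F ^ k) := by
  induction k with
  | zero => exact fun n hn => by rw [pow_zero, coeff_one, if_neg (by rintro rfl; simp at hn)]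
  | succ k ih => exact pow_succ F k ▸ ih.mul hF

theorem IsPSingular.psExp [Algebra ℚ R] {F : PowerSeries R} (hF : IsPSingular p F) :
    IsPSingular p (_root_.psExp F) := fun n hn => by
  rw [_root_.psExp, coeff_mk]
  exact sum_eq_zero fun k _ => by rw [hF.pow k n hn, smul_zero]

theorem isPSingular_pSingularPart (p : ℕ) (F : PowerSeries R) :
    IsPSingular p (pSingularPart p F) :=
  fun n hn => by rw [pSingularPart, coeff_mk, if_neg hn]

theorem pSingularPart_add_pRegularPart (F : PowerSeries R) :
    pSingularPart p F + pRegularPart p F = F := by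
  ext n
  rw [map_add, pSingularPart, pRegularPart, coeff_mk, coeff_mk]
  split_ifs <;> simp

theorem constantCoeff_pSingularPart {F : PowerSeries R} (hF : constantCoeff F = 0) :
    constantCoeff (pSingularPart p F) = 0 := by
  rw [← coeff_zero_eq_constantCoeff_apply, pSingularPart, coeff_mk, if_pos (dvd_zero p),
    coeff_zero_eq_constantCoeff_apply, hF]

theorem constantCoeff_pRegularPart (F : PowerSeries R) :
    constantCoeff (pRegularPart p F) = 0 := by
  rw [← coeff_zero_eq_constantCoeff_apply, pRegularPart, coeff_mk, if_pos (dvd_zero p)]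

/-- Multiplying by a `p`-singular series does not change whether `p` divides the exponent. -/
theorem IsPSingular.sum_antidiagonal_coeff_mul_ite {S : PowerSeries R} (hS : IsPSingular p S)
    (n : ℕ) (f g : ℕ → R) :
    ∑ ij ∈ antidiagonal n, coeff ij.1 S * (if p ∣ ij.2 then f ij.2 else g ij.2) =
      if p ∣ n then ∑ ij ∈ antidiagonal n, coeff ij.1 S * f ij.2
      else ∑ ij ∈ antidiagonal n, coeff ij.1 S * g ij.2 := by
  rw [← sum_ite_irrel]
  refine sum_congr rfl fun ⟨i, j⟩ hij => ?_
  rw [HasAntidiagonal.mem_antidiagonal] at hij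
  subst hij
  by_cases hi : p ∣ i
  · simp only [Nat.dvd_add_right hi, mul_ite]
  · simp only [hS i hi, zero_mul, ite_self]

theorem IsPSingular.pSingularPart_mul {S : PowerSeries R} (hS : IsPSingular p S)
    (F : PowerSeries R) : pSingularPart p (S * F) = S * pSingularPart p F := by
  ext n
  simp only [pSingularPart, coeff_mk, coeff_mul]
  rw [hS.sum_antidiagonal_coeff_mul_ite n (coeff · F) fun _ => 0]
  simp only [mul_zero, sum_const_zero]

theorem IsPSingular.pRegularPart_mul {S : PowerSeries R} (hS : IsPSingular p S)
    (F : PowerSeries R) : pRegularPart p (S * F) = S * pRegularPart p F := by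
  ext n
  simp only [pRegularPart, coeff_mk, coeff_mul]
  rw [hS.sum_antidiagonal_coeff_mul_ite n (fun _ => 0) (coeff · F)]
  simp only [mul_zero, sum_const_zero]

end Parts

theorem stmt4_general (p : ℕ) (R : Type*) [CommRing R] [Algebra ℚ R]
    (C X : PowerSeries R)
    (hC : PowerSeries.constantCoeff C = 0)
    (hX : X = psExp C) :
    pSingularPart p X =
        psExp (pSingularPart p C) * pSingularPart p (psExp (pRegularPart p C)) ∧
      pRegularPart p X =
        psExp (pSingularPart p C) * pRegularPart p (psExp (pRegularPart p C)) := by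
  have hX' : X = psExp (pSingularPart p C) * psExp (pRegularPart p C) := by
    rw [hX, ← psExp_add (constantCoeff_pSingularPart hC) (constantCoeff_pRegularPart C),
      pSingularPart_add_pRegularPart]
  have hS := (isPSingular_pSingularPart p C).psExp
  exact ⟨hX' ▸ hS.pSingularPart_mul _, hX' ▸ hS.pRegularPart_mul _⟩

/-- let `X = exp C` with `C` of zero constant term, let `U`,`V` be the
`p`-singular and `p`-regular parts of `X`, and `A`,`B` the `p`-singular and `p`-regular
parts of `C`.  With `ch_p(B)` the `p`-singular part of `exp B` and `sh_p(B)` its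
`p`-regular part, one has `U = exp(A)·ch_p(B)` and `V = exp(A)·sh_p(B)`. -/
theorem stmt4 (p : ℕ) (hp : p.Prime) (R : Type*) [CommRing R] [Algebra ℚ R]
    (C X : PowerSeries R)
    (hC : PowerSeries.constantCoeff C = 0)
    (hX : X = psExp C) :
    pSingularPart p X =
        psExp (pSingularPart p C) * pSingularPart p (psExp (pRegularPart p C)) ∧
      pRegularPart p X =
        psExp (pSingularPart p C) * pRegularPart p (psExp (pRegularPart p C)) :=
  stmt4_general p R C X hC hX
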